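/- Let x be a sequence in a first countable topological space X and let I be a generalized density ideal. Then for every ordinary limit point ℓ of x, the set {ω ∈ (0,1] : ℓ is an I-limit point of x↾ω} is comeager in (0,1]. -/

import Mathlib

open Filter Topology Set MeasureTheory
open scoped ENNReal

noncomputable section

/-- An ideal on ℕ: contains all finite sets, closed under subsets and finite
unions, and does not contain ℕ itself. -/
def IsIdealOn (I : Set (Set ℕ)) : Prop :=
  (∀ ⦃A B : Set ℕ⦄, A ⊆ B → B ∈ I → A ∈ I) ∧
  (∀ ⦃A B : Set ℕ⦄, A ∈ I → B ∈ I → A ∪ B ∈ I) ∧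
  (∀ A : Set ℕ, A.Finite → A ∈ I) ∧
  (Set.univ : Set ℕ) ∉ I

/-- `l` is an `I`-cluster point of the sequence `x`. -/
def IdealClusterPt {X : Type*} [TopologicalSpace X] (I : Set (Set ℕ)) (x : ℕ → X) (l : X) : Prop :=
  ∀ U ∈ 𝓝 l, {n | x n ∈ U} ∉ I

/-- `l` is an `I`-limit point of the sequence `x`. -/
def IdealLimitPt {X : Type*} [TopologicalSpace X] (I : Set (Set ℕ)) (x : ℕ → X) (l : X) : Prop :=
  ∃ k : ℕ → ℕ, StrictMono k ∧ Tendsto (x ∘ k) atTop (𝓝 l) ∧ Set.range k ∉ I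

/-- Ordinary limit points of a sequence. -/
def limitPts {X : Type*} [TopologicalSpace X] (x : ℕ → X) : Set X :=
  {l | ∃ k : ℕ → ℕ, StrictMono k ∧ Tendsto (x ∘ k) atTop (𝓝 l)}

/-- The `i`-th digit (0-indexed; representing `d_{i+1}`) of the non-terminating
dyadic expansion of `ω ∈ (0,1]`. -/
def dyadicDigit (ω : ℝ) (i : ℕ) : ℤ :=
  ⌈(2:ℝ) ^ (i + 1) * ω⌉ - 2 * ⌈(2:ℝ) ^ i * ω⌉ + 1

/-- The subsequence `x↾ω` of `x` keeping `x i` iff the dyadic digit of `ω` at `i` is `1`. -/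
def subseq {X : Type*} (x : ℕ → X) (ω : ℝ) : ℕ → X :=
  fun k => x (Nat.nth (fun i => dyadicDigit ω i = 1) k)

open Classical in
/-- Characteristic-function embedding of `P(ℕ)` into Cantor space. -/
def chi (A : Set ℕ) : ℕ → Bool := fun n => if n ∈ A then true else false

def IsFsigma {α : Type*} [TopologicalSpace α] (s : Set α) : Prop :=
  ∃ F : ℕ → Set α, (∀ n, IsClosed (F n)) ∧ s = ⋃ n, F n

def IsFsigmaDelta {α : Type*} [TopologicalSpace α] (s : Set α) : Prop :=
  ∃ F : ℕ → Set α, (∀ n, IsFsigma (F n)) ∧ s = ⋂ n, F n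

/-- `I` is `F_σ`-separated from its dual filter. -/
def FsigmaSeparated (I : Set (Set ℕ)) : Prop :=
  ∃ A : Set (ℕ → Bool), IsFsigma A ∧ chi '' I ⊆ A ∧ A ∩ chi '' {S : Set ℕ | Sᶜ ∈ I} = ∅

/-- A submeasure on ℕ. -/
def IsSubmeasureOn (φ : Set ℕ → ℝ≥0∞) : Prop :=
  φ ∅ = 0 ∧ (∀ ⦃A B : Set ℕ⦄, A ⊆ B → φ A ≤ φ B) ∧
    (∀ A B : Set ℕ, φ (A ∪ B) ≤ φ A + φ B) ∧ ∀ n : ℕ, φ {n} ≠ ⊤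

/-- A partition of ℕ into nonempty finite sets. -/
def IsFinPartition (P : ℕ → Set ℕ) : Prop :=
  (∀ n, (P n).Finite ∧ (P n).Nonempty) ∧ (⋃ n, P n) = Set.univ ∧
    Pairwise (Function.onFun Disjoint P)

/-- The generalized density ideal determined by `(P n)` and `(μ n)`. -/
def Zmu (P : ℕ → Set ℕ) (μ : ℕ → Set ℕ → ℝ≥0∞) : Set (Set ℕ) :=
  {A | Tendsto (fun n => μ n (A ∩ P n)) atTop (𝓝 0)}

def IsGenDensityIdeal (I : Set (Set ℕ)) : Prop :=
  ∃ (P : ℕ → Set ℕ) (μ : ℕ → Set ℕ → ℝ≥0∞), IsFinPartition P ∧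
    (∀ n, IsSubmeasureOn (μ n)) ∧ (∀ n A, μ n A = μ n (A ∩ P n)) ∧
    Filter.limsup (fun n => μ n (P n)) atTop ≠ 0 ∧ I = Zmu P μ

/-- Exhaustive ideal of a submeasure. -/
def Exh (φ : Set ℕ → ℝ≥0∞) : Set (Set ℕ) :=
  {A | Tendsto (fun n => φ (A \ Set.Iio n)) atTop (𝓝 0)}

open Classical in
/-- The ideal `I_α`. -/
def Ialpha (α : ℝ) : Set (Set ℕ) :=
  {A | (fun n => ∑ i ∈ Finset.Icc 1 n, if i ∈ A then (i:ℝ) ^ α else 0)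
      =o[atTop] (fun n => ∑ i ∈ Finset.Icc 1 n, (i:ℝ) ^ α)}

open Classical in
/-- The ideal of natural density zero sets. -/
def densityZero : Set (Set ℕ) :=
  {A | Tendsto (fun n : ℕ => (∑ i ∈ Finset.range n, if i ∈ A then (1:ℝ) else 0) / n)
      atTop (𝓝 0)}

open Classical in
def phiEU (f : ℕ → ℝ) (A : Set ℕ) : ℝ :=
  ⨆ n : ℕ, (∑ i ∈ Finset.Icc 1 n, if i ∈ A then f i else 0) / (∑ i ∈ Finset.Icc 1 n, f i)

def ExhReal (φ : Set ℕ → ℝ) : Set (Set ℕ) :=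
  {A | Tendsto (fun n => φ (A \ Set.Iio n)) atTop (𝓝 0)}

def IsErdosUlamIdeal (I : Set (Set ℕ)) : Prop :=
  ∃ f : ℕ → ℝ, (∀ n, 0 < f n) ∧
    Tendsto (fun n => ∑ i ∈ Finset.Icc 1 n, f i) atTop atTop ∧
    (fun n => f n) =o[atTop] (fun n => ∑ i ∈ Finset.Icc 1 n, f i) ∧
    I = ExhReal (phiEU f)

end

/-!
Let `x ∘ k → ℓ`. For `ω ∈ (0,1]` let `E ω` be the set of indices `j` such that the `j`-th digit `1`
of `ω` sits at a position in the range of `k`; along `E ω` the sequence `x↾ω` converges to `ℓ`.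
The first `n` digits of `ω` are encoded by `⌈2 ^ n * ω⌉`, i.e. by the dyadic interval
`((c - 1) / 2 ^ n, c / 2 ^ n]` containing `ω`, and inside any dyadic interval the next digits can be
prescribed at will. Fix `0 < ε < limsup μₙ(Iₙ)`. Since the blocks `Iₙ` are finite and eventually
lie beyond any given position, for every `m` the set of `ω` such that `Iₙ ⊆ E ω` for some `n ≥ m`
with `μₙ(Iₙ) > ε` has dense interior. On the resulting comeager set `E ω` contains infinitely many
such blocks, so `E ω ∉ Z_μ` and `ℓ` is a `Z_μ`-limit point of `x↾ω`.
-/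

open Function

lemma Nat.count_le_count_add_of_forall_Ico {p q : ℕ → Prop} [DecidablePred p]
    [DecidablePred q] {L d : ℕ} (h : ∀ i ∈ Ico L (L + d), p i ↔ q i) :
    Nat.count q (L + d) ≤ Nat.count p (L + d) + L := by
  have hshift : Nat.count (fun k => p (L + k)) d = Nat.count (fun k => q (L + k)) d := by
    simp only [Nat.count_eq_card_filter_range]
    congr 1
    refine Finset.filter_congr fun i hi => h _ ⟨Nat.le_add_right L i, ?_⟩
    simpa using Finset.mem_range.1 hi
  rw [Nat.count_add, Nat.count_add, hshift]
  linarith [Nat.count_le q (n := L)]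

lemma Nat.nth_mem_of_forall_Ico {p : ℕ → Prop} [DecidablePred p] (hp : {i | p i}.Infinite)
    {S : Set ℕ} {L n j : ℕ} (hpS : ∀ i ∈ Ico L n, p i ↔ i ∈ S) (hL : Nat.count p L ≤ j)
    (hn : j < Nat.count p n) : Nat.nth p j ∈ S :=
  (hpS _ ⟨(Nat.count_le_iff_le_nth hp).1 hL, Nat.nth_lt_of_lt_count hn⟩).1
    (Nat.nth_mem_of_infinite hp j)

lemma eventually_residual_frequently_mem {α : Type*} [TopologicalSpace α] {G : ℕ → Set α}
    {Q : ℕ → Prop} (hG : ∀ m, Dense (⋃ n, ⋃ (_ : m ≤ n ∧ Q n), interior (G n))) :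
    ∀ᶠ ω in residual α, ∃ᶠ n in atTop, Q n ∧ ω ∈ G n := by
  have hm : ∀ m, ∀ᶠ ω in residual α, ∃ n ≥ m, Q n ∧ ω ∈ G n := fun m =>
    mem_of_superset (residual_of_dense_open (isOpen_iUnion fun n => isOpen_iUnion fun _ =>
      isOpen_interior) (hG m)) fun ω hω => by
        obtain ⟨n, hn, hωn⟩ := mem_iUnion₂.1 hω
        exact ⟨n, hn.1, hn.2, interior_subset hωn⟩
  filter_upwards [eventually_countable_forall.2 hm] with ω hω
  exact frequently_atTop.2 hω

lemma eventually_subset_Ici_of_pairwise_disjoint {P : ℕ → Set ℕ}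
    (hP : Pairwise (Disjoint on P)) (L : ℕ) : ∀ᶠ n in atTop, P n ⊆ Ici L := by
  rw [← Nat.cofinite_eq_atTop, eventually_cofinite]
  have hsub : ∀ i, {n | i ∈ P n}.Subsingleton := fun i n hn n' hn' =>
    by_contra fun hne => disjoint_left.1 (hP hne) hn hn'
  refine ((finite_Iio L).biUnion fun i _ => (hsub i).finite).subset fun n hn => ?_
  obtain ⟨i, hi, hiL⟩ := not_subset.1 hn
  exact mem_biUnion (mem_Iio.2 (not_le.1 hiL)) hi

lemma infinite_of_frequently_subset {P : ℕ → Set ℕ} (hP : Pairwise (Disjoint on P))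
    (hne : ∀ n, (P n).Nonempty) {E : Set ℕ} (hE : ∃ᶠ n in atTop, P n ⊆ E) : E.Infinite := by
  intro hfin
  obtain ⟨L, hL⟩ := hfin.bddAbove
  obtain ⟨n, hnE, hnL⟩ :=
    (hE.and_eventually (eventually_subset_Ici_of_pairwise_disjoint hP (L + 1))).exists
  obtain ⟨j, hj⟩ := hne n
  have h₁ : j ≤ L := hL (hnE hj)
  have h₂ : L + 1 ≤ j := hnL hj
  omega

lemma notMem_Zmu_of_frequently {P : ℕ → Set ℕ} {μ : ℕ → Set ℕ → ℝ≥0∞}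
    (hμ : ∀ n, Monotone (μ n)) {ε : ℝ≥0∞} (hε : 0 < ε) {E : Set ℕ}
    (hE : ∃ᶠ n in atTop, ε < μ n (P n) ∧ P n ⊆ E) : E ∉ Zmu P μ := fun hEZ => by
  obtain ⟨n, ⟨hεn, hPE⟩, hn⟩ := (hE.and_eventually (hEZ.eventually (gt_mem_nhds hε))).exists
  exact (hεn.trans_le (hμ n (subset_inter hPE subset_rfl))).not_gt hn

lemma idealLimitPt_comp_of_preimage_range_notMem {X : Type*} [TopologicalSpace X]
    {I : Set (Set ℕ)} {x : ℕ → X} {l : X} {k g : ℕ → ℕ} (hk : StrictMono k)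
    (hkl : Tendsto (x ∘ k) atTop (𝓝 l)) (hg : StrictMono g) (hE : (g ⁻¹' range k).Infinite)
    (hEI : g ⁻¹' range k ∉ I) : IdealLimitPt I (x ∘ g) l := by
  set e := Nat.nth (· ∈ g ⁻¹' range k)
  have he : StrictMono e := Nat.nth_strictMono hE
  refine ⟨e, he, ?_, by rwa [Nat.range_nth_of_infinite (p := (· ∈ g ⁻¹' range k)) hE]⟩
  choose r hr using Nat.nth_mem_of_infinite (p := (· ∈ g ⁻¹' range k)) hE
  have hr_tendsto : Tendsto r atTop atTop := tendsto_atTop_atTop.2 fun b =>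
    ⟨k b, fun t ht => hk.le_iff_le.1 <| (hr t).symm ▸ ht.trans (hg.comp he).le_apply⟩
  have hcomp : x ∘ g ∘ e = (x ∘ k) ∘ r := funext fun t => congrArg x (hr t).symm
  rw [Function.comp_assoc, hcomp]
  exact hkl.comp hr_tendsto

lemma ceil_two_pow_succ_mul_mem_Icc (ω : ℝ) (i : ℕ) :
    ⌈(2:ℝ) ^ (i + 1) * ω⌉ ∈ Icc (2 * ⌈(2:ℝ) ^ i * ω⌉ - 1) (2 * ⌈(2:ℝ) ^ i * ω⌉) := by
  rw [show (2:ℝ) ^ (i + 1) * ω = 2 ^ i * ω + 2 ^ i * ω by ring, two_mul]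
  exact ⟨by linarith [Int.ceil_add_ceil_le ((2:ℝ) ^ i * ω) (2 ^ i * ω)], Int.ceil_add_le _ _⟩

lemma dyadicDigit_eq_zero_or_one (ω : ℝ) (i : ℕ) :
    dyadicDigit ω i = 0 ∨ dyadicDigit ω i = 1 := by
  obtain ⟨h₁, h₂⟩ := ceil_two_pow_succ_mul_mem_Icc ω i
  unfold dyadicDigit
  omega

lemma ceil_two_pow_mul_eq_div_two (ω : ℝ) (i : ℕ) :
    ⌈(2:ℝ) ^ i * ω⌉ = (⌈(2:ℝ) ^ (i + 1) * ω⌉ + 1) / 2 := by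
  obtain ⟨h₁, h₂⟩ := ceil_two_pow_succ_mul_mem_Icc ω i
  omega

lemma infinite_setOf_dyadicDigit_eq_one (ω : ℝ) :
    {i | dyadicDigit ω i = 1}.Infinite := by
  -- `g i ∈ (0, 1]` doubles at every digit `0`, so the digits cannot vanish from some point on.
  set g : ℕ → ℝ := fun i => 2 ^ i * ω - ⌈(2:ℝ) ^ i * ω⌉ + 1
  have hg_pos : ∀ i, 0 < g i := fun i => by
    linarith [Int.ceil_lt_add_one ((2:ℝ) ^ i * ω)]
  have hg_le : ∀ i, g i ≤ 1 := fun i => by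
    linarith [Int.le_ceil ((2:ℝ) ^ i * ω)]
  have hg_succ : ∀ i, dyadicDigit ω i = 0 → g (i + 1) = 2 * g i := fun i hi => by
    have : ⌈(2:ℝ) ^ (i + 1) * ω⌉ = 2 * ⌈(2:ℝ) ^ i * ω⌉ - 1 := by
      unfold dyadicDigit at hi
      omega
    change (2:ℝ) ^ (i + 1) * ω - ⌈(2:ℝ) ^ (i + 1) * ω⌉ + 1 =
      2 * (2 ^ i * ω - ⌈(2:ℝ) ^ i * ω⌉ + 1)
    rw [this, pow_succ]
    push_cast
    ring
  rw [← Nat.frequently_atTop_iff_infinite, frequently_atTop]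
  intro L
  by_contra! h
  have hg_pow : ∀ M, g (L + M) = 2 ^ M * g L := by
    intro M
    induction M with
    | zero => simp
    | succ M ih =>
      rw [← add_assoc, hg_succ _ ((dyadicDigit_eq_zero_or_one ω _).resolve_right
        (h _ (Nat.le_add_right L M))), ih, pow_succ]
      ring
  obtain ⟨M, hM⟩ := pow_unbounded_of_one_lt (1 / g L) one_lt_two
  rw [div_lt_iff₀ (hg_pos L)] at hM
  linarith [hg_le (L + M), hg_pow M]

lemma ceil_two_pow_mul_eq_of_mem_Ioo {n : ℕ} {c : ℤ} {y : ℝ}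
    (hy : y ∈ Ioo (((c:ℝ) - 1) / 2 ^ n) (c / 2 ^ n)) : ⌈(2:ℝ) ^ n * y⌉ = c := by
  have h2 : (0:ℝ) < 2 ^ n := by positivity
  obtain ⟨hlo, hhi⟩ := hy
  rw [div_lt_iff₀ h2] at hlo
  rw [lt_div_iff₀ h2] at hhi
  rw [Int.ceil_eq_iff]
  constructor <;> linarith

lemma dist_lt_of_ceil_two_pow_mul_eq {L : ℕ} {y z : ℝ}
    (h : ⌈(2:ℝ) ^ L * y⌉ = ⌈(2:ℝ) ^ L * z⌉) : dist y z < (1 / 2) ^ L := by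
  have h2 : (0:ℝ) < 2 ^ L := by positivity
  have hy := Int.ceil_lt_add_one ((2:ℝ) ^ L * y)
  have hz := Int.ceil_lt_add_one ((2:ℝ) ^ L * z)
  have hy' := Int.le_ceil ((2:ℝ) ^ L * y)
  have hz' := Int.le_ceil ((2:ℝ) ^ L * z)
  rw [h] at hy hy'
  rw [Real.dist_eq, one_div_pow, abs_sub_lt_iff, lt_div_iff₀ h2, lt_div_iff₀ h2]
  constructor <;> linarith

lemma exists_ceil_eq_forall_dyadicDigit (S : Set ℕ) {L : ℕ} {c₀ : ℤ} (h₁ : 1 ≤ c₀)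
    (h₂ : c₀ ≤ 2 ^ L) {n : ℕ} (hLn : L ≤ n) :
    ∃ c : ℤ, 1 ≤ c ∧ c ≤ 2 ^ n ∧ ∀ y : ℝ, ⌈(2:ℝ) ^ n * y⌉ = c →
      ⌈(2:ℝ) ^ L * y⌉ = c₀ ∧ ∀ i ∈ Ico L n, (dyadicDigit y i = 1 ↔ i ∈ S) := by
  classical
  induction n, hLn using Nat.le_induction with
  | base => exact ⟨c₀, h₁, h₂, fun y hy => ⟨hy, by simp⟩⟩
  | succ n hLn ih =>
    obtain ⟨c, hc₁, hc₂, hc⟩ := ih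
    refine ⟨2 * c - 1 + if n ∈ S then 1 else 0, by split_ifs <;> omega,
      by rw [pow_succ]; split_ifs <;> omega, fun y hy => ?_⟩
    have hprev : ⌈(2:ℝ) ^ n * y⌉ = c := by
      rw [ceil_two_pow_mul_eq_div_two, hy]
      split_ifs <;> omega
    obtain ⟨hL, hdig⟩ := hc y hprev
    refine ⟨hL, fun i hi => ?_⟩
    rcases (Nat.lt_succ_iff.1 hi.2).lt_or_eq with hin | rfl
    · exact hdig i ⟨hi.1, hin⟩
    · unfold dyadicDigit
      rw [hy, hprev]
      split_ifs with hiS <;> simp [hiS]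

lemma exists_Ioo_mapsTo_nth_dyadicDigit {S : Set ℕ} (hS : S.Infinite) {ω₀ : ℝ}
    (hω₀ : ω₀ ∈ Ioc 0 1) (L B : ℕ) :
    ∃ a b : ℝ, a < b ∧ ∀ y ∈ Ioo a b, y ∈ Ioc 0 1 ∧ dist y ω₀ < (1 / 2) ^ L ∧
      MapsTo (Nat.nth fun i => dyadicDigit y i = 1) (Icc L B) S := by
  classical
  obtain ⟨d, hd⟩ : ∃ d, L + B < Nat.count (· ∈ S) (L + d) := by
    refine ⟨Nat.nth (· ∈ S) (L + B) + 1, ?_⟩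
    calc L + B < Nat.count (· ∈ S) (Nat.nth (· ∈ S) (L + B) + 1) := by
          rw [Nat.count_nth_succ_of_infinite (p := (· ∈ S)) hS]
          omega
      _ ≤ _ := Nat.count_monotone _ (Nat.le_add_left _ L)
  have hc₀ : 1 ≤ ⌈(2:ℝ) ^ L * ω₀⌉ := Int.one_le_ceil_iff.2 (by have := hω₀.1; positivity)
  have hc₀' : ⌈(2:ℝ) ^ L * ω₀⌉ ≤ 2 ^ L := Int.ceil_le.2 <| by
    push_cast
    exact mul_le_of_le_one_right (by positivity) hω₀.2
  obtain ⟨c, hc₁, hc₂, hc⟩ :=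
    exists_ceil_eq_forall_dyadicDigit S hc₀ hc₀' (Nat.le_add_right L d)
  have h2 : (0:ℝ) < 2 ^ (L + d) := by positivity
  have hc₁' : (1:ℝ) ≤ c := by exact_mod_cast hc₁
  have hc₂' : (c:ℝ) ≤ 2 ^ (L + d) := by exact_mod_cast hc₂
  refine ⟨(c - 1) / 2 ^ (L + d), c / 2 ^ (L + d), by gcongr; linarith, fun y hy => ?_⟩
  obtain ⟨hyL, hdig⟩ := hc y (ceil_two_pow_mul_eq_of_mem_Ioo hy)
  refine ⟨⟨?_, ?_⟩, dist_lt_of_ceil_two_pow_mul_eq hyL, fun j hj => ?_⟩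
  · exact (div_nonneg (by linarith) h2.le).trans_lt hy.1
  · exact hy.2.le.trans ((div_le_one h2).2 hc₂')
  · exact Nat.nth_mem_of_forall_Ico (infinite_setOf_dyadicDigit_eq_one y) hdig
      ((Nat.count_le _).trans hj.1)
      (by linarith [hj.2, Nat.count_le_count_add_of_forall_Ico hdig])

lemma dense_iUnion_interior_mapsTo_nth_dyadicDigit {S : Set ℕ} (hS : S.Infinite)
    {F : ℕ → Set ℕ} (hF : ∀ n, (F n).Finite) {Q : ℕ → Prop}
    (hQ : ∀ L, ∃ᶠ n in atTop, Q n ∧ F n ⊆ Ici L) (m : ℕ) :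
    Dense (⋃ n, ⋃ (_ : m ≤ n ∧ Q n), interior
      {ω : Ioc (0:ℝ) 1 | MapsTo (Nat.nth fun i => dyadicDigit ω i = 1) (F n) S}) := by
  rw [Metric.dense_iff]
  intro ω₀ δ hδ
  obtain ⟨L, hL⟩ := exists_pow_lt_of_lt_one hδ one_half_lt_one
  obtain ⟨n, ⟨hQn, hFn⟩, hmn⟩ := ((hQ L).and_eventually (eventually_ge_atTop m)).exists
  obtain ⟨B, hB⟩ := (hF n).bddAbove
  obtain ⟨a, b, hab, hgood⟩ := exists_Ioo_mapsTo_nth_dyadicDigit hS ω₀.2 L B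
  have hmid : (a + b) / 2 ∈ Ioo a b := ⟨by linarith, by linarith⟩
  have hopen : IsOpen (Subtype.val ⁻¹' Ioo a b : Set (Ioc (0:ℝ) 1)) :=
    isOpen_Ioo.preimage continuous_subtype_val
  have hsub : (Subtype.val ⁻¹' Ioo a b : Set (Ioc (0:ℝ) 1)) ⊆
      {ω | MapsTo (Nat.nth fun i => dyadicDigit ω i = 1) (F n) S} :=
    fun y hy j hj => (hgood y hy).2.2 ⟨hFn hj, hB hj⟩
  refine ⟨⟨(a + b) / 2, (hgood _ hmid).1⟩, (hgood _ hmid).2.1.trans hL,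
    mem_iUnion₂.2 ⟨n, ⟨hmn, hQn⟩, interior_maximal hsub hopen hmid⟩⟩

theorem limitPt_subseq_comeager_general {X : Type*} [TopologicalSpace X]
    (x : ℕ → X) (I : Set (Set ℕ)) (hI : IsGenDensityIdeal I)
    (l : X) (hl : l ∈ limitPts x) :
    IsMeagre {ω : Set.Ioc (0:ℝ) 1 | ¬ IdealLimitPt I (subseq x ↑ω) l} := by
  obtain ⟨P, μ, ⟨hPfin, -, hPdisj⟩, hμ, -, hlimsup, rfl⟩ := hI
  obtain ⟨k, hk, hkl⟩ := hl
  obtain ⟨ε, hε, hεlt⟩ := exists_between (pos_iff_ne_zero.2 hlimsup)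
  have hfreq : ∀ L, ∃ᶠ n in atTop, ε < μ n (P n) ∧ P n ⊆ Ici L := fun L =>
    (frequently_lt_of_lt_limsup (by isBoundedDefault) hεlt).and_eventually
      (eventually_subset_Ici_of_pairwise_disjoint hPdisj L)
  filter_upwards [eventually_residual_frequently_mem
    (dense_iUnion_interior_mapsTo_nth_dyadicDigit (infinite_range_of_injective hk.injective)
      (fun n => (hPfin n).1) hfreq)] with ω hω
  refine not_not_intro (idealLimitPt_comp_of_preimage_range_notMem hk hkl
    (Nat.nth_strictMono (infinite_setOf_dyadicDigit_eq_one ω)) ?_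
    (notMem_Zmu_of_frequently (fun n => (hμ n).2.1) hε hω))
  exact infinite_of_frequently_subset hPdisj (fun n => (hPfin n).2) (hω.mono fun n hn => hn.2)

/-- For a generalized density ideal `I`, the set of `ω` such that `ℓ` is an
`I`-limit point of `x↾ω` is comeager, for every ordinary limit point `ℓ`. -/
theorem limitPt_subseq_comeager {X : Type*} [TopologicalSpace X]
    [FirstCountableTopology X]
    (x : ℕ → X) (I : Set (Set ℕ)) (hI : IsGenDensityIdeal I)
    (l : X) (hl : l ∈ limitPts x) :
    IsMeagre {ω : Set.Ioc (0:ℝ) 1 | ¬ IdealLimitPt I (subseq x ↑ω) l} :=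
  limitPt_subseq_comeager_general x I hI l hl
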